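/- arXiv:1405.0680 — 2 statements merged into one kernel-verified Lean document; each statement's English description precedes it below -/
import Mathlib

section
/- Let Σ, Σ̂ ∈ ℝ^{p×p} be symmetric matrices with eigenvalues λ₁ ≥ … ≥ λ_p and λ̂₁ ≥ … ≥ λ̂_p respectively, fix 1 ≤ r ≤ s ≤ p with d := s − r + 1, and set Λ := diag(λ_r, …, λ_s). Let V̂ = (v̂_r, …, v̂_s) ∈ ℝ^{p×d} have orthonormal columns satisfying Σ̂v̂_j = λ̂_j v̂_j for j = r, …, s. Then ‖V̂Λ − ΣV̂‖_F ≤ 2 d^{1/2} ‖Σ̂ − Σ‖_op. -/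
open Matrix

noncomputable def frobNorm {m n : Type*} [Fintype m] [Fintype n] (A : Matrix m n ℝ) : ℝ :=
  Real.sqrt (∑ i, ∑ j, (A i j) ^ 2)

noncomputable def opNorm {p q : ℕ} (A : Matrix (Fin p) (Fin q) ℝ) : ℝ :=
  ‖LinearMap.toContinuousLinearMap (Matrix.toEuclideanLin A)‖

/-!
Column `j` of `V̂Λ - ΣV̂` is `(λⱼ - λ̂ⱼ) v̂ⱼ + (Σ̂ - Σ) v̂ⱼ`. Weyl's inequality
`|λⱼ - λ̂ⱼ| ≤ ‖Σ̂ - Σ‖_op` and `‖v̂ⱼ‖ = 1` bound its Euclidean norm by `2 ‖Σ̂ - Σ‖_op`, and the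
Frobenius norm of a matrix with `d` columns is at most `√d` times its largest column norm.
-/

open WithLp

section Euclidean

lemma norm_toLp_sq_eq_dotProduct {n : Type*} [Fintype n] (x : n → ℝ) :
    ‖toLp 2 x‖ ^ 2 = x ⬝ᵥ x := by
  rw [← real_inner_self_eq_norm_sq, EuclideanSpace.inner_toLp_toLp, star_trivial]

lemma opNorm_nonneg {m n : ℕ} (A : Matrix (Fin m) (Fin n) ℝ) : 0 ≤ opNorm A :=
  norm_nonneg _

lemma opNorm_sub_comm {n : ℕ} (A B : Matrix (Fin n) (Fin n) ℝ) :
    opNorm (A - B) = opNorm (B - A) := by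
  rw [opNorm, opNorm, ← neg_sub B A, map_neg, map_neg, norm_neg]

lemma norm_toLp_mulVec_le {m n : ℕ} (A : Matrix (Fin m) (Fin n) ℝ) (x : Fin n → ℝ) :
    ‖toLp 2 (A *ᵥ x)‖ ≤ opNorm A * ‖toLp 2 x‖ :=
  (LinearMap.toContinuousLinearMap (toEuclideanLin A)).le_opNorm (toLp 2 x)

lemma dotProduct_mulVec_le_opNorm_mul {n : ℕ} (A : Matrix (Fin n) (Fin n) ℝ) (x : Fin n → ℝ) :
    x ⬝ᵥ (A *ᵥ x) ≤ opNorm A * (x ⬝ᵥ x) := by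
  calc x ⬝ᵥ (A *ᵥ x) = inner ℝ (toLp 2 x) (toLp 2 (A *ᵥ x)) := by
        rw [EuclideanSpace.inner_toLp_toLp, star_trivial, dotProduct_comm]
    _ ≤ ‖toLp 2 x‖ * ‖toLp 2 (A *ᵥ x)‖ := real_inner_le_norm _ _
    _ ≤ ‖toLp 2 x‖ * (opNorm A * ‖toLp 2 x‖) := by
        gcongr; exact norm_toLp_mulVec_le A x
    _ = opNorm A * (x ⬝ᵥ x) := by rw [← norm_toLp_sq_eq_dotProduct]; ring

lemma frobNorm_le_of_norm_col_le {m n : Type*} [Fintype m] [Fintype n] (M : Matrix m n ℝ)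
    {c : ℝ} (hc : 0 ≤ c) (h : ∀ j, ‖toLp 2 (Mᵀ j)‖ ≤ c) :
    frobNorm M ≤ √(Fintype.card n) * c := by
  have hcol : ∀ j, ∑ i, M i j ^ 2 ≤ c ^ 2 := fun j => by
    simpa [EuclideanSpace.norm_sq_eq] using pow_le_pow_left₀ (norm_nonneg _) (h j) 2
  calc frobNorm M = √(∑ j, ∑ i, M i j ^ 2) := by rw [frobNorm, Finset.sum_comm]
    _ ≤ √(Fintype.card n * c ^ 2) := by
        gcongr
        simpa using Finset.sum_le_sum fun j (_ : j ∈ Finset.univ) => hcol j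
    _ = √(Fintype.card n) * c := by
        rw [Real.sqrt_mul (Nat.cast_nonneg _), Real.sqrt_sq hc]

end Euclidean

section CourantFischer

variable {ι : Type*} [Fintype ι] [LinearOrder ι]

lemma exists_ne_zero_mulVec_eq_zero_lt_gt {K : Type*} [Field K] (A B : Matrix ι ι K) (k : ι) :
    ∃ x ≠ 0, (∀ i < k, (A *ᵥ x) i = 0) ∧ (∀ i, k < i → (B *ᵥ x) i = 0) := by
  classical
  let L : (ι → K) →ₗ[K] ({i // i ≠ k} → K) := LinearMap.pi fun i =>
    LinearMap.proj i.1 ∘ₗ (if i.1 < k then A.mulVecLin else B.mulVecLin)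
  have hrank : Module.finrank K ({i // i ≠ k} → K) < Module.finrank K (ι → K) := by
    have : 0 < Fintype.card ι := Fintype.card_pos_iff.mpr ⟨k⟩
    simp only [Module.finrank_fintype_fun_eq_card, Fintype.card_subtype_compl,
      Fintype.card_subtype_eq]
    omega
  obtain ⟨x, hx, hx0⟩ := Submodule.ne_bot_iff _ |>.mp (LinearMap.ker_ne_bot_of_finrank_lt hrank)
  have hL : ∀ i (hi : i ≠ k), L x ⟨i, hi⟩ = 0 := fun i hi => congrFun hx ⟨i, hi⟩
  refine ⟨x, hx0, fun i hi => ?_, fun i hi => ?_⟩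
  · simpa [L, hi] using hL i hi.ne
  · simpa [L, hi.not_gt] using hL i hi.ne'

variable {μ : ι → ℝ} {y : ι → ℝ} {k : ι}

lemma mul_dotProduct_self_le_sum_of_eq_zero_gt (hμ : Antitone μ) (hy : ∀ i, k < i → y i = 0) :
    μ k * (y ⬝ᵥ y) ≤ ∑ i, μ i * y i ^ 2 := by
  rw [dotProduct, Finset.mul_sum]
  refine Finset.sum_le_sum fun i _ => ?_
  rcases lt_or_ge k i with hki | hik
  · simp [hy i hki]
  · rw [← sq]; exact mul_le_mul_of_nonneg_right (hμ hik) (sq_nonneg _)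

lemma sum_le_mul_dotProduct_self_of_eq_zero_lt (hμ : Antitone μ) (hy : ∀ i < k, y i = 0) :
    ∑ i, μ i * y i ^ 2 ≤ μ k * (y ⬝ᵥ y) := by
  rw [dotProduct, Finset.mul_sum]
  refine Finset.sum_le_sum fun i _ => ?_
  rcases lt_or_ge i k with hik | hki
  · simp [hy i hik]
  · rw [← sq]; exact mul_le_mul_of_nonneg_right (hμ hki) (sq_nonneg _)

end CourantFischer

section Conjugation

variable {R ι : Type*} [CommRing R] [Fintype ι] [DecidableEq ι]

lemma dotProduct_conj_diagonal_mulVec (Q : Matrix ι ι R) (f : ι → R) (x : ι → R) :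
    x ⬝ᵥ ((Q * diagonal f * Qᵀ) *ᵥ x) = ∑ i, f i * (Qᵀ *ᵥ x) i ^ 2 := by
  rw [← mulVec_mulVec, ← mulVec_mulVec, dotProduct_mulVec, ← mulVec_transpose]
  simp only [dotProduct, mulVec_diagonal]
  exact Finset.sum_congr rfl fun i _ => by ring

lemma transpose_mulVec_dotProduct_self {Q : Matrix ι ι R} (hQ : Qᵀ * Q = 1) (x : ι → R) :
    (Qᵀ *ᵥ x) ⬝ᵥ (Qᵀ *ᵥ x) = x ⬝ᵥ x := by
  rw [dotProduct_mulVec, vecMul_transpose, mulVec_mulVec, mul_eq_one_comm.mp hQ, one_mulVec]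

end Conjugation

section Weyl

variable {p : ℕ}

/-- Weyl's inequality, by the Courant–Fischer argument: by counting dimensions some `x ≠ 0` lies
in the span of the columns `0, …, k` of `Q` and of the columns `k, …, p - 1` of `R`, and comparing
the two quadratic forms at `x` gives the bound. -/
lemma weyl_le_add_opNorm_sub {μ ν : Fin p → ℝ} (hμ : Antitone μ) (hν : Antitone ν)
    {Q R : Matrix (Fin p) (Fin p) ℝ} (hQ : Qᵀ * Q = 1) (hR : Rᵀ * R = 1) (k : Fin p) :
    μ k ≤ ν k + opNorm (Q * diagonal μ * Qᵀ - R * diagonal ν * Rᵀ) := by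
  set S := Q * diagonal μ * Qᵀ
  set T := R * diagonal ν * Rᵀ
  obtain ⟨x, hx0, hRx, hQx⟩ := exists_ne_zero_mulVec_eq_zero_lt_gt Rᵀ Qᵀ k
  have hlow : μ k * (x ⬝ᵥ x) ≤ x ⬝ᵥ (S *ᵥ x) := by
    rw [dotProduct_conj_diagonal_mulVec, ← transpose_mulVec_dotProduct_self hQ]
    exact mul_dotProduct_self_le_sum_of_eq_zero_gt hμ hQx
  have hhigh : x ⬝ᵥ (T *ᵥ x) ≤ ν k * (x ⬝ᵥ x) := by
    rw [dotProduct_conj_diagonal_mulVec, ← transpose_mulVec_dotProduct_self hR]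
    exact sum_le_mul_dotProduct_self_of_eq_zero_lt hν hRx
  have hdiff : x ⬝ᵥ (S *ᵥ x) - x ⬝ᵥ (T *ᵥ x) ≤ opNorm (S - T) * (x ⬝ᵥ x) := by
    rw [← dotProduct_sub, ← sub_mulVec]
    exact dotProduct_mulVec_le_opNorm_mul _ x
  have hpos : 0 < x ⬝ᵥ x := by
    rw [← norm_toLp_sq_eq_dotProduct]
    exact pow_pos (norm_pos_iff.mpr fun h => hx0 (congrArg ofLp h)) 2
  refine le_of_mul_le_mul_right ?_ hpos
  linarith

lemma weyl_abs_sub_le_opNorm_sub {μ ν : Fin p → ℝ} (hμ : Antitone μ) (hν : Antitone ν)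
    {Q R : Matrix (Fin p) (Fin p) ℝ} (hQ : Qᵀ * Q = 1) (hR : Rᵀ * R = 1) (k : Fin p) :
    |μ k - ν k| ≤ opNorm (Q * diagonal μ * Qᵀ - R * diagonal ν * Rᵀ) := by
  have h₁ := weyl_le_add_opNorm_sub hμ hν hQ hR k
  have h₂ := weyl_le_add_opNorm_sub hν hμ hR hQ k
  rw [opNorm_sub_comm] at h₂
  exact abs_sub_le_iff.mpr ⟨by linarith, by linarith⟩

end Weyl

lemma transpose_mul_diagonal_sub_mul_apply {m n : Type*} [Fintype m] [Fintype n] [DecidableEq n]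
    (V : Matrix m n ℝ) (f : n → ℝ) (S : Matrix m m ℝ) (j : n) :
    (V * diagonal f - S * V)ᵀ j = f j • Vᵀ j - S *ᵥ Vᵀ j := by
  ext i
  simp only [transpose_apply, Matrix.sub_apply, mul_diagonal, Pi.sub_apply, Pi.smul_apply,
    smul_eq_mul, mul_comm (V i j)]
  rfl

lemma norm_toLp_transpose_apply {m n : Type*} [Fintype m] [DecidableEq n] {V : Matrix m n ℝ}
    (hV : Vᵀ * V = 1) (j : n) : ‖toLp 2 (Vᵀ j)‖ = 1 := by
  rw [← pow_eq_one_iff_of_nonneg (norm_nonneg _) two_ne_zero, norm_toLp_sq_eq_dotProduct]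
  have hjj := congrFun (congrFun hV j) j
  rwa [mul_apply', one_apply_eq] at hjj

lemma norm_smul_sub_mulVec_le {p : ℕ} (S T : Matrix (Fin p) (Fin p) ℝ) {v : Fin p → ℝ}
    {μ ν : ℝ} (hv : T *ᵥ v = ν • v) (hv1 : ‖toLp 2 v‖ = 1) :
    ‖toLp 2 (μ • v - S *ᵥ v)‖ ≤ |μ - ν| + opNorm (T - S) := by
  have hsplit : μ • v - S *ᵥ v = (μ - ν) • v + (T - S) *ᵥ v := by
    rw [sub_mulVec, hv, sub_smul]; abel
  calc ‖toLp 2 (μ • v - S *ᵥ v)‖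
      = ‖(μ - ν) • toLp 2 v + toLp 2 ((T - S) *ᵥ v)‖ := by rw [hsplit]; rfl
    _ ≤ |μ - ν| * ‖toLp 2 v‖ + opNorm (T - S) * ‖toLp 2 v‖ := by
        grw [norm_add_le, norm_smul, norm_toLp_mulVec_le, Real.norm_eq_abs]
    _ = |μ - ν| + opNorm (T - S) := by rw [hv1, mul_one, mul_one]

theorem stmt10_general
    (p r s d : ℕ) (hr : 1 ≤ r) (hrs : r ≤ s) (hsp : s ≤ p) (hd : d = s - r + 1)
    (lam lamh : ℕ → ℝ)
    (hmono : ∀ i j, 1 ≤ i → i ≤ j → j ≤ p → lam j ≤ lam i)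
    (hmonoh : ∀ i j, 1 ≤ i → i ≤ j → j ≤ p → lamh j ≤ lamh i)
    (S Sh : Matrix (Fin p) (Fin p) ℝ)
    (hSspec : ∃ Q : Matrix (Fin p) (Fin p) ℝ, Qᵀ * Q = 1 ∧
      S = Q * Matrix.diagonal (fun i : Fin p => lam (i.1 + 1)) * Qᵀ)
    (hShspec : ∃ Q : Matrix (Fin p) (Fin p) ℝ, Qᵀ * Q = 1 ∧
      Sh = Q * Matrix.diagonal (fun i : Fin p => lamh (i.1 + 1)) * Qᵀ)
    (Vh : Matrix (Fin p) (Fin d) ℝ) (hVh : Vhᵀ * Vh = 1)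
    (hVheig : ∀ j : Fin d, Sh.mulVec (fun i => Vh i j) = lamh (r + j.1) • (fun i => Vh i j)) :
    frobNorm (Vh * Matrix.diagonal (fun j : Fin d => lam (r + j.1)) - S * Vh) ≤
      2 * Real.sqrt d * opNorm (Sh - S) := by
  have hanti : ∀ μ : ℕ → ℝ, (∀ i j, 1 ≤ i → i ≤ j → j ≤ p → μ j ≤ μ i) →
      Antitone fun i : Fin p => μ (i.1 + 1) :=
    fun μ h i j hij => h _ _ (by omega) (by simpa using hij) (by omega)
  obtain ⟨Q, hQ, hS⟩ := hSspec
  obtain ⟨R, hR, hSh⟩ := hShspec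
  calc frobNorm (Vh * diagonal (fun j : Fin d => lam (r + j.1)) - S * Vh)
      ≤ √(Fintype.card (Fin d)) * (2 * opNorm (Sh - S)) :=
        frobNorm_le_of_norm_col_le _ (by positivity [opNorm_nonneg (Sh - S)]) fun j => ?_
    _ = 2 * √d * opNorm (Sh - S) := by rw [Fintype.card_fin]; ring
  let k : Fin p := ⟨r + j - 1, by omega⟩
  have hk : k.1 + 1 = r + j := by simp only [k]; omega
  have hgap := weyl_abs_sub_le_opNorm_sub (hanti _ hmono) (hanti _ hmonoh) hQ hR k
  rw [hk, ← hS, ← hSh, opNorm_sub_comm] at hgap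
  rw [transpose_mul_diagonal_sub_mul_apply]
  refine (norm_smul_sub_mulVec_le S Sh (hVheig j) (norm_toLp_transpose_apply hVh j)).trans ?_
  linarith

theorem stmt10
    (p r s d : ℕ) (hr : 1 ≤ r) (hrs : r ≤ s) (hsp : s ≤ p) (hd : d = s - r + 1)
    (lam lamh : ℕ → ℝ)
    (hmono : ∀ i j, 1 ≤ i → i ≤ j → j ≤ p → lam j ≤ lam i)
    (hmonoh : ∀ i j, 1 ≤ i → i ≤ j → j ≤ p → lamh j ≤ lamh i)
    (S Sh : Matrix (Fin p) (Fin p) ℝ) (hSsymm : S.IsSymm) (hShsymm : Sh.IsSymm)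
    (hSspec : ∃ Q : Matrix (Fin p) (Fin p) ℝ, Qᵀ * Q = 1 ∧
      S = Q * Matrix.diagonal (fun i : Fin p => lam (i.1 + 1)) * Qᵀ)
    (hShspec : ∃ Q : Matrix (Fin p) (Fin p) ℝ, Qᵀ * Q = 1 ∧
      Sh = Q * Matrix.diagonal (fun i : Fin p => lamh (i.1 + 1)) * Qᵀ)
    (Vh : Matrix (Fin p) (Fin d) ℝ) (hVh : Vhᵀ * Vh = 1)
    (hVheig : ∀ j : Fin d, Sh.mulVec (fun i => Vh i j) = lamh (r + j.1) • (fun i => Vh i j)) :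
    frobNorm (Vh * Matrix.diagonal (fun j : Fin d => lam (r + j.1)) - S * Vh) ≤
      2 * Real.sqrt d * opNorm (Sh - S) :=
  stmt10_general p r s d hr hrs hsp hd lam lamh hmono hmonoh S Sh hSspec hShspec Vh hVh hVheig
end

section
/- Let Σ, Σ̂ ∈ ℝ^{p×p} be symmetric matrices with eigenvalues λ₁ ≥ … ≥ λ_p and λ̂₁ ≥ … ≥ λ̂_p respectively, fix 1 ≤ r ≤ s ≤ p with d := s − r + 1, and assume δ := min(λ_{r−1} − λ_r, λ_s − λ_{s+1}) > 0 (with λ₀ := ∞, λ_{p+1} := −∞). Let Λ := diag(λ_r, …, λ_s), let V = (v_r, …, v_s) ∈ ℝ^{p×d} and V̂ = (v̂_r, …, v̂_s) ∈ ℝ^{p×d} have orthonormal columns satisfying Σv_j = λ_j v_j and Σ̂v̂_j = λ̂_j v̂_j for j = r, …, s. Then there exists an orthogonal matrix Ô ∈ ℝ^{d×d} such that ‖V̂Ô − V‖_F ≤ 2^{1/2} ‖V̂Λ − ΣV̂‖_F / δ. -/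
/-!
In an eigenbasis `Q` of `Σ` the columns of `V` are supported on the coordinates of the window
`[r, s]`, while on every coordinate outside the window `Σ` has an eigenvalue at distance at least
`δ` from each entry of `Λ`. Hence the mass of `V̂` outside the window, which equals
`d - ‖Vᵀ V̂‖_F²`, is at most `‖V̂ Λ - Σ V̂‖_F² / δ²`. Taking for `Ô` the orthogonal polar factor of
`V̂ᵀ V`, whose singular values lie in `[0, 1]`, gives
`‖V̂ Ô - V‖_F² = 2d - 2 tr (Ôᵀ V̂ᵀ V) ≤ 2 (d - ‖V̂ᵀ V‖_F²)`.
-/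

open Matrix

section FrobNorm

variable {m n : Type*} [Fintype m] [Fintype n]

lemma frobNorm_nonneg (A : Matrix m n ℝ) : 0 ≤ frobNorm A :=
  Real.sqrt_nonneg _

lemma frobNorm_sq_eq_sum (A : Matrix m n ℝ) : frobNorm A ^ 2 = ∑ i, ∑ j, A i j ^ 2 :=
  Real.sq_sqrt (by positivity)

lemma frobNorm_sq_eq_trace (A : Matrix m n ℝ) : frobNorm A ^ 2 = trace (Aᵀ * A) := by
  rw [frobNorm_sq_eq_sum]
  simp only [trace, diag_apply, mul_apply, transpose_apply, sq]
  exact Finset.sum_comm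

lemma frobNorm_transpose (A : Matrix m n ℝ) : frobNorm Aᵀ = frobNorm A := by
  simp only [frobNorm, transpose_apply]
  rw [Finset.sum_comm]

lemma frobNorm_mul_of_transpose_mul_self [DecidableEq m] {Q : Matrix m m ℝ} (hQ : Qᵀ * Q = 1)
    (A : Matrix m n ℝ) : frobNorm (Q * A) = frobNorm A := by
  rw [← sq_eq_sq₀ (frobNorm_nonneg _) (frobNorm_nonneg _), frobNorm_sq_eq_trace,
    frobNorm_sq_eq_trace, transpose_mul, Matrix.mul_assoc, ← Matrix.mul_assoc Qᵀ, hQ,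
    Matrix.one_mul]

variable [DecidableEq n]

lemma frobNorm_sq_of_transpose_mul_self {W : Matrix m n ℝ} (hW : Wᵀ * W = 1) :
    frobNorm W ^ 2 = Fintype.card n := by
  rw [frobNorm_sq_eq_trace, hW, trace_one]

lemma frobNorm_mul_sub_sq {X Y : Matrix m n ℝ} (hX : Xᵀ * X = 1) (hY : Yᵀ * Y = 1)
    {O : Matrix n n ℝ} (hO : Oᵀ * O = 1) :
    frobNorm (X * O - Y) ^ 2 = 2 * Fintype.card n - 2 * trace (Oᵀ * (Xᵀ * Y)) := by
  have hXO : (X * O)ᵀ * (X * O) = 1 := by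
    rw [transpose_mul, Matrix.mul_assoc, ← Matrix.mul_assoc Xᵀ, hX, Matrix.one_mul, hO]
  have hcross : trace (Yᵀ * (X * O)) = trace (Oᵀ * (Xᵀ * Y)) := by
    rw [← trace_transpose, transpose_mul, transpose_transpose, transpose_mul, Matrix.mul_assoc]
  rw [frobNorm_sq_eq_trace, transpose_sub, Matrix.sub_mul, Matrix.mul_sub, Matrix.mul_sub,
    trace_sub, trace_sub, trace_sub, hXO, hY, hcross, transpose_mul, Matrix.mul_assoc, trace_one]
  ring

end FrobNorm

lemma Matrix.mul_eq_mul_diagonal_of_mulVec_eq_smul {m n α : Type*} [Fintype m] [Fintype n]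
    [DecidableEq n] [CommSemiring α] {A : Matrix m m α} {V : Matrix m n α} {ν : n → α}
    (h : ∀ j, A *ᵥ (fun i => V i j) = ν j • fun i => V i j) : A * V = V * diagonal ν := by
  ext i j
  rw [mul_diagonal]
  simpa [mul_apply, mulVec, dotProduct, mul_comm] using congrFun (h j) i

section Contraction

variable {m n k : Type*} [Fintype m] [Fintype n] [Fintype k]

variable [DecidableEq n]

lemma dotProduct_mulVec_self_of_transpose_mul_self {X : Matrix m n ℝ} (hX : Xᵀ * X = 1)
    (x : n → ℝ) : (X *ᵥ x) ⬝ᵥ (X *ᵥ x) = x ⬝ᵥ x := by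
  rw [← dotProduct_transpose_mulVec, mulVec_mulVec, hX, one_mulVec]

lemma dotProduct_transpose_mulVec_self_le {X : Matrix m n ℝ} (hX : Xᵀ * X = 1) (y : m → ℝ) :
    (Xᵀ *ᵥ y) ⬝ᵥ (Xᵀ *ᵥ y) ≤ y ⬝ᵥ y := by
  set u := Xᵀ *ᵥ y
  have hXu : y ⬝ᵥ (X *ᵥ u) = u ⬝ᵥ u := (dotProduct_transpose_mulVec X u y).symm
  -- the residual of the orthogonal projection of y onto the column space of X
  have hres : 0 ≤ (y - X *ᵥ u) ⬝ᵥ (y - X *ᵥ u) := dotProduct_self_star_nonneg _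
  rw [sub_dotProduct, dotProduct_sub, dotProduct_sub, dotProduct_comm (X *ᵥ u) y, hXu,
    dotProduct_mulVec_self_of_transpose_mul_self hX] at hres
  linarith

lemma dotProduct_transpose_mul_mulVec_self_le [DecidableEq k] {X : Matrix m n ℝ}
    {Y : Matrix m k ℝ} (hX : Xᵀ * X = 1) (hY : Yᵀ * Y = 1) (x : k → ℝ) :
    ((Xᵀ * Y) *ᵥ x) ⬝ᵥ ((Xᵀ * Y) *ᵥ x) ≤ x ⬝ᵥ x := by
  rw [← mulVec_mulVec, ← dotProduct_mulVec_self_of_transpose_mul_self hY x]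
  exact dotProduct_transpose_mulVec_self_le hX _

end Contraction

section Procrustes

variable {n : Type*} [Fintype n] [DecidableEq n]

lemma exists_orthogonal_eq_mul_diagonal_sqrt {C : Matrix n n ℝ} {D : n → ℝ}
    (hC : Cᵀ * C = diagonal D) :
    ∃ P : Matrix n n ℝ, Pᵀ * P = 1 ∧ C = P * diagonal fun j => √(D j) := by
  set c : n → n → ℝ := fun j k => C k j
  have hc : ∀ i j, c i ⬝ᵥ c j = if i = j then D i else 0 := fun i j => by
    simpa [mul_apply, dotProduct, diagonal_apply] using congrFun₂ hC i j
  have hD : ∀ j, 0 ≤ D j := fun j => by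
    simpa [hc] using dotProduct_self_star_nonneg (c j)
  set v : n → EuclideanSpace ℝ n := fun j => WithLp.toLp 2 ((√(D j))⁻¹ • c j)
  have hv : Orthonormal ℝ ({j | D j ≠ 0}.domRestrict v) := by
    rw [orthonormal_iff_ite]
    rintro ⟨i, hi⟩ ⟨j, hj⟩
    change inner ℝ (v i) (v j) = _
    simp only [v, EuclideanSpace.inner_toLp_toLp, star_trivial, smul_dotProduct, dotProduct_smul,
      hc, Subtype.mk.injEq, smul_eq_mul]
    by_cases hij : i = j
    · subst hij
      have hne : √(D i) ≠ 0 := Real.sqrt_ne_zero'.mpr ((hD i).lt_of_ne' hi)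
      field_simp
      simp [Real.sq_sqrt (hD i)]
    · simp [hij, Ne.symm hij]
  obtain ⟨b, hb⟩ := hv.exists_orthonormalBasis_extension_of_card_eq
    (by simp [finrank_euclideanSpace])
  refine ⟨(EuclideanSpace.basisFun n ℝ).toBasis.toMatrix b.toBasis, ?_, ?_⟩
  · simpa using (EuclideanSpace.basisFun n ℝ).toMatrix_orthonormalBasis_conjTranspose_mul_self b
  · ext k j
    rw [mul_diagonal]
    change c j k = b j k * √(D j)
    by_cases hj : D j = 0
    · have : c j = 0 := dotProduct_self_eq_zero.mp (by simp [hc, hj])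
      simp [hj, this]
    · rw [hb j hj]
      have hne : √(D j) ≠ 0 := Real.sqrt_ne_zero'.mpr ((hD j).lt_of_ne' hj)
      simp only [v, Pi.smul_apply, smul_eq_mul]
      field_simp

lemma exists_orthogonal_frobNorm_sq_le_trace {B : Matrix n n ℝ}
    (hB : ∀ x, (B *ᵥ x) ⬝ᵥ (B *ᵥ x) ≤ x ⬝ᵥ x) :
    ∃ O : Matrix n n ℝ, Oᵀ * O = 1 ∧ frobNorm B ^ 2 ≤ trace (Oᵀ * B) := by
  have hG : (Bᵀ * B).IsHermitian := by
    simpa using isHermitian_conjTranspose_mul_self B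
  set Q : Matrix n n ℝ := (hG.eigenvectorUnitary : Matrix n n ℝ)
  set D := hG.eigenvalues
  have hQ : Qᵀ * Q = 1 := by
    simpa [star_eq_conjTranspose] using Unitary.coe_star_mul_self hG.eigenvectorUnitary
  have hQ' : Q * Qᵀ = 1 := mul_eq_one_comm.mp hQ
  have hGQ : (Bᵀ * B) * Q = Q * diagonal D :=
    mul_eq_mul_diagonal_of_mulVec_eq_smul fun j => hG.mulVec_eigenvectorBasis j
  have hC : (B * Q)ᵀ * (B * Q) = diagonal D := by
    rw [transpose_mul, Matrix.mul_assoc, ← Matrix.mul_assoc Bᵀ, hGQ, ← Matrix.mul_assoc, hQ,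
      Matrix.one_mul]
  obtain ⟨P, hP, hBQ⟩ := exists_orthogonal_eq_mul_diagonal_sqrt hC
  have hD : ∀ j, D j ≤ 1 := fun j => by
    have hDj : D j = (B *ᵥ fun k => Q k j) ⬝ᵥ (B *ᵥ fun k => Q k j) := by
      simpa [mul_apply, dotProduct, mulVec, mul_comm] using (congrFun₂ hC j j).symm
    have hQj : (fun k => Q k j) ⬝ᵥ (fun k => Q k j) = 1 := by
      simpa [mul_apply, dotProduct] using congrFun₂ hQ j j
    exact hDj ▸ hQj ▸ hB _
  refine ⟨P * Qᵀ, ?_, ?_⟩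
  · rw [transpose_mul, transpose_transpose, Matrix.mul_assoc, ← Matrix.mul_assoc Pᵀ, hP,
      Matrix.one_mul, hQ']
  have hB' : B = P * diagonal (fun j => √(D j)) * Qᵀ := by
    rw [← hBQ, Matrix.mul_assoc, hQ', Matrix.mul_one]
  have htrG : frobNorm B ^ 2 = ∑ j, D j := by
    rw [frobNorm_sq_eq_trace, hG.trace_eq_sum_eigenvalues]
    rfl
  have htrO : trace ((P * Qᵀ)ᵀ * B) = ∑ j, √(D j) := by
    rw [hB', transpose_mul, transpose_transpose, Matrix.mul_assoc, ← Matrix.mul_assoc Pᵀ,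
      ← Matrix.mul_assoc Pᵀ, hP, Matrix.one_mul, trace_mul_comm, Matrix.mul_assoc, hQ,
      Matrix.mul_one, trace_diagonal]
  rw [htrG, htrO]
  exact Finset.sum_le_sum fun j _ => Real.le_sqrt_self_iff.mpr (hD j)

end Procrustes

lemma Matrix.transpose_mul_eq_submatrix_of_eq_zero {ι κ m n α : Type*} [Fintype ι] [Fintype κ]
    [CommSemiring α] (e : κ ↪ ι) {A : Matrix ι m α} (B : Matrix ι n α)
    (hA : ∀ i ∉ Set.range e, ∀ j, A i j = 0) :
    Aᵀ * B = (A.submatrix e id)ᵀ * B.submatrix e id := by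
  ext j k
  simp only [mul_apply, transpose_apply, submatrix_apply, id]
  exact (Fintype.sum_of_injective e e.injective _ _ (fun i hi => by simp [hA i hi])
    fun _ => rfl).symm

section DavisKahan

variable {ι κ : Type*} [Fintype ι] [Fintype κ] [DecidableEq ι] [DecidableEq κ]

theorem davisKahan_diagonal {μ : ι → ℝ} {ν : κ → ℝ} (e : κ ↪ ι) {δ : ℝ} (hδ : 0 < δ)
    (hgap : ∀ i ∉ Set.range e, ∀ j, δ ≤ |ν j - μ i|) {U W : Matrix ι κ ℝ}
    (hU : Uᵀ * U = 1) (hW : Wᵀ * W = 1) (hUeig : diagonal μ * U = U * diagonal ν) :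
    δ ^ 2 * (Fintype.card κ - frobNorm (Uᵀ * W) ^ 2) ≤
      frobNorm (W * diagonal ν - diagonal μ * W) ^ 2 := by
  have hU0 : ∀ i ∉ Set.range e, ∀ j, U i j = 0 := fun i hi j => by
    have hij : (ν j - μ i) * U i j = 0 := by
      have := congrFun₂ hUeig i j
      rw [diagonal_mul, mul_diagonal] at this
      linear_combination -this
    exact (mul_eq_zero.mp hij).resolve_left
      (abs_pos.mp (hδ.trans_le (hgap i hi j)))
  set Ue := U.submatrix e id
  have hUe : Ue * Ueᵀ = 1 := by
    rw [mul_eq_one_comm, ← transpose_mul_eq_submatrix_of_eq_zero e U hU0, hU]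
  have hproj : frobNorm (Uᵀ * W) ^ 2 = ∑ a, ∑ j, W (e a) j ^ 2 := by
    rw [transpose_mul_eq_submatrix_of_eq_zero e W hU0,
      frobNorm_mul_of_transpose_mul_self (by rwa [transpose_transpose]), frobNorm_sq_eq_sum]
    rfl
  set T := Finset.univ.map e
  have hout : Fintype.card κ - frobNorm (Uᵀ * W) ^ 2 = ∑ i ∈ Tᶜ, ∑ j, W i j ^ 2 := by
    rw [← frobNorm_sq_of_transpose_mul_self hW, frobNorm_sq_eq_sum, hproj,
      ← Finset.sum_add_sum_compl T, Finset.sum_map]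
    ring
  rw [hout, frobNorm_sq_eq_sum, Finset.mul_sum]
  calc ∑ i ∈ Tᶜ, δ ^ 2 * ∑ j, W i j ^ 2
      ≤ ∑ i ∈ Tᶜ, ∑ j, ((ν j - μ i) * W i j) ^ 2 := by
        refine Finset.sum_le_sum fun i hi => ?_
        rw [Finset.mul_sum]
        refine Finset.sum_le_sum fun j _ => ?_
        have hi' : i ∉ Set.range e := by simpa [T] using hi
        rw [mul_pow, ← sq_abs (ν j - μ i)]
        gcongr
        exact hgap i hi' j
    _ ≤ ∑ i, ∑ j, (W * diagonal ν - diagonal μ * W) i j ^ 2 := by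
        simp only [Matrix.sub_apply, mul_diagonal, diagonal_mul, ← sub_mul, mul_comm (W _ _)]
        exact Finset.sum_le_sum_of_subset_of_nonneg (Finset.subset_univ _)
          fun i _ _ => by positivity

theorem davisKahan {μ : ι → ℝ} {ν : κ → ℝ} (e : κ ↪ ι) {δ : ℝ} (hδ : 0 < δ)
    (hgap : ∀ i ∉ Set.range e, ∀ j, δ ≤ |ν j - μ i|) {Q : Matrix ι ι ℝ} (hQ : Qᵀ * Q = 1)
    {V Vh : Matrix ι κ ℝ} (hV : Vᵀ * V = 1) (hVh : Vhᵀ * Vh = 1)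
    (hVeig : Q * diagonal μ * Qᵀ * V = V * diagonal ν) :
    ∃ O : Matrix κ κ ℝ, Oᵀ * O = 1 ∧
      frobNorm (Vh * O - V) ≤
        √2 * frobNorm (Vh * diagonal ν - Q * diagonal μ * Qᵀ * Vh) / δ := by
  have hQ' : Q * Qᵀ = 1 := mul_eq_one_comm.mp hQ
  have hrot : ∀ {A : Matrix ι κ ℝ}, Aᵀ * A = 1 → (Qᵀ * A)ᵀ * (Qᵀ * A) = 1 := fun hA => by
    rw [transpose_mul, transpose_transpose, Matrix.mul_assoc, ← Matrix.mul_assoc Q, hQ',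
      Matrix.one_mul, hA]
  have hUeig : diagonal μ * (Qᵀ * V) = Qᵀ * V * diagonal ν := by
    rw [Matrix.mul_assoc, ← hVeig]
    simp only [← Matrix.mul_assoc, hQ, Matrix.one_mul]
  have hDK := davisKahan_diagonal e hδ hgap (hrot hV) (hrot hVh) hUeig
  have hcross : frobNorm ((Qᵀ * V)ᵀ * (Qᵀ * Vh)) = frobNorm (Vhᵀ * V) := by
    rw [transpose_mul, transpose_transpose, Matrix.mul_assoc, ← Matrix.mul_assoc Q, hQ',
      Matrix.one_mul, ← frobNorm_transpose, transpose_mul, transpose_transpose]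
  have hres : frobNorm (Vh * diagonal ν - Q * diagonal μ * Qᵀ * Vh) =
      frobNorm (Qᵀ * Vh * diagonal ν - diagonal μ * (Qᵀ * Vh)) := by
    rw [← frobNorm_mul_of_transpose_mul_self hQ (Qᵀ * Vh * _ - _), Matrix.mul_sub]
    simp only [← Matrix.mul_assoc, hQ', Matrix.one_mul]
  rw [hcross, ← hres] at hDK
  obtain ⟨O, hO, hOtr⟩ :=
    exists_orthogonal_frobNorm_sq_le_trace (dotProduct_transpose_mul_mulVec_self_le hVh hV)
  refine ⟨O, hO, ?_⟩
  have hsq : frobNorm (Vh * O - V) ^ 2 ≤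
      (√2 * frobNorm (Vh * diagonal ν - Q * diagonal μ * Qᵀ * Vh) / δ) ^ 2 := by
    rw [frobNorm_mul_sub_sq hVh hV hO, div_pow, mul_pow, Real.sq_sqrt zero_le_two,
      le_div_iff₀ (by positivity)]
    nlinarith [mul_le_mul_of_nonneg_left hOtr (sq_nonneg δ)]
  exact (pow_le_pow_iff_left₀ (frobNorm_nonneg _)
    (div_nonneg (mul_nonneg (Real.sqrt_nonneg _) (frobNorm_nonneg _)) hδ.le) two_ne_zero).mp hsq

end DavisKahan

lemma le_abs_sub_of_outside_window {p r s : ℕ} {lam : ℕ → ℝ} {δ : ℝ} (hr : 1 ≤ r) (hsp : s ≤ p)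
    (hmono : ∀ i j, 1 ≤ i → i ≤ j → j ≤ p → lam j ≤ lam i)
    (hgapr : 1 < r → δ ≤ lam (r - 1) - lam r) (hgaps : s < p → δ ≤ lam s - lam (s + 1))
    {i j : ℕ} (hi : 1 ≤ i ∧ i ≤ p) (hout : i < r ∨ s < i) (hj : r ≤ j ∧ j ≤ s) :
    δ ≤ |lam j - lam i| := by
  rcases hout with h | h
  · have h1 := hmono i (r - 1) hi.1 (by omega) (by omega)
    have h2 := hmono r j hr hj.1 (by omega)
    have h3 := hgapr (by omega)
    rw [abs_sub_comm]
    exact le_abs.mpr (Or.inl (by linarith))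
  · have h1 := hmono (s + 1) i (by omega) h hi.2
    have h2 := hmono j s (by omega) hj.2 hsp
    have h3 := hgaps (by omega)
    exact le_abs.mpr (Or.inl (by linarith))

theorem stmt19_general
    (p r s d : ℕ) (hr : 1 ≤ r) (hrs : r ≤ s) (hsp : s ≤ p) (hd : d = s - r + 1)
    (lam : ℕ → ℝ)
    (hmono : ∀ i j, 1 ≤ i → i ≤ j → j ≤ p → lam j ≤ lam i)
    (S : Matrix (Fin p) (Fin p) ℝ)
    (hSspec : ∃ Q : Matrix (Fin p) (Fin p) ℝ, Qᵀ * Q = 1 ∧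
      S = Q * Matrix.diagonal (fun i : Fin p => lam (i.1 + 1)) * Qᵀ)
    (δ : ℝ) (hδ : 0 < δ)
    (hgapr : 1 < r → δ ≤ lam (r - 1) - lam r)
    (hgaps : s < p → δ ≤ lam s - lam (s + 1))
    (V Vh : Matrix (Fin p) (Fin d) ℝ) (hV : Vᵀ * V = 1) (hVh : Vhᵀ * Vh = 1)
    (hVeig : ∀ j : Fin d, S.mulVec (fun i => V i j) = lam (r + j.1) • (fun i => V i j)) :
    ∃ O : Matrix (Fin d) (Fin d) ℝ, Oᵀ * O = 1 ∧
      frobNorm (Vh * O - V) ≤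
        Real.sqrt 2 *
          frobNorm (Vh * Matrix.diagonal (fun j : Fin d => lam (r + j.1)) - S * Vh) / δ := by
  obtain ⟨Q, hQ, rfl⟩ := hSspec
  let e : Fin d ↪ Fin p :=
    ⟨fun a => ⟨r - 1 + a, by have := a.2; omega⟩, fun a b h => Fin.ext (by simpa using h)⟩
  refine davisKahan e hδ (fun i hi j => ?_) hQ hV hVh
    (mul_eq_mul_diagonal_of_mulVec_eq_smul hVeig)
  have hout : i.1 + 1 < r ∨ s < i.1 + 1 := by
    by_contra h
    exact hi ⟨⟨i + 1 - r, by omega⟩, Fin.ext (show r - 1 + (i.1 + 1 - r) = i.1 by omega)⟩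
  exact le_abs_sub_of_outside_window hr hsp hmono hgapr hgaps ⟨by omega, i.2⟩ hout
    ⟨by omega, by have := j.2; omega⟩

theorem stmt19
    (p r s d : ℕ) (hr : 1 ≤ r) (hrs : r ≤ s) (hsp : s ≤ p) (hd : d = s - r + 1)
    (lam lamh : ℕ → ℝ)
    (hmono : ∀ i j, 1 ≤ i → i ≤ j → j ≤ p → lam j ≤ lam i)
    (hmonoh : ∀ i j, 1 ≤ i → i ≤ j → j ≤ p → lamh j ≤ lamh i)
    (S Sh : Matrix (Fin p) (Fin p) ℝ) (hSsymm : S.IsSymm) (hShsymm : Sh.IsSymm)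
    (hSspec : ∃ Q : Matrix (Fin p) (Fin p) ℝ, Qᵀ * Q = 1 ∧
      S = Q * Matrix.diagonal (fun i : Fin p => lam (i.1 + 1)) * Qᵀ)
    (hShspec : ∃ Q : Matrix (Fin p) (Fin p) ℝ, Qᵀ * Q = 1 ∧
      Sh = Q * Matrix.diagonal (fun i : Fin p => lamh (i.1 + 1)) * Qᵀ)
    (δ : ℝ) (hδ : 0 < δ)
    (hgapr : 1 < r → δ ≤ lam (r - 1) - lam r)
    (hgaps : s < p → δ ≤ lam s - lam (s + 1))
    (V Vh : Matrix (Fin p) (Fin d) ℝ) (hV : Vᵀ * V = 1) (hVh : Vhᵀ * Vh = 1)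
    (hVeig : ∀ j : Fin d, S.mulVec (fun i => V i j) = lam (r + j.1) • (fun i => V i j))
    (hVheig : ∀ j : Fin d, Sh.mulVec (fun i => Vh i j) = lamh (r + j.1) • (fun i => Vh i j)) :
    ∃ O : Matrix (Fin d) (Fin d) ℝ, Oᵀ * O = 1 ∧
      frobNorm (Vh * O - V) ≤
        Real.sqrt 2 *
          frobNorm (Vh * Matrix.diagonal (fun j : Fin d => lam (r + j.1)) - S * Vh) / δ :=
  stmt19_general p r s d hr hrs hsp hd lam hmono S hSspec δ hδ hgapr hgaps V Vh hV hVh hVeig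
end
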